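/- For every p ∈ ℤ[t] with p ∉ 2ℤ[t], the ℤ[t]-module M(p) is isomorphic to its dual M(p)^∧ = Hom_{ℤ[t]}(M(p), ℚ[t]/ℤ[t]). -/
import Mathlib


noncomputable instance : Algebra (Polynomial ℤ) (Polynomial ℚ) :=
  (Polynomial.mapRingHom (Int.castRingHom ℚ)).toAlgebra

/-- The `ℤ[t]`-module `ℚ[t]/ℤ[t]`. -/
noncomputable abbrev QtZt : Type :=
  Polynomial ℚ ⧸ LinearMap.range (Algebra.linearMap (Polynomial ℤ) (Polynomial ℚ))

/-- The ring (and `ℤ[t]`-module) `ℤ[t]/4ℤ[t]`. -/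
noncomputable abbrev Z4t : Type := Polynomial ℤ ⧸ Ideal.span {(4 : Polynomial ℤ)}

/-- For `p ∈ ℤ[t]`, `M(p)` is the `ℤ[t]`-submodule of `ℤ[t]/4ℤ[t]` generated by the
residue classes of `p` and of `2`; equivalently, it is generated by `φ, τ` subject only
to `2τ = 0` and `2φ = pτ`. -/
noncomputable def Mp (p : Polynomial ℤ) : Submodule (Polynomial ℤ) Z4t :=
  Submodule.span (Polynomial ℤ)
    {Ideal.Quotient.mk (Ideal.span {(4 : Polynomial ℤ)}) p,
     Ideal.Quotient.mk (Ideal.span {(4 : Polynomial ℤ)}) 2}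

namespace MpAux

open Polynomial

local notation "R" => Polynomial ℤ
local notation "Q" => Polynomial ℚ

noncomputable def i : R →+* Q := algebraMap R Q

lemma i_inj : Function.Injective (i : R →+* Q) := by
  have : (i : R →+* Q) = Polynomial.mapRingHom (Int.castRingHom ℚ) := rfl
  rw [this]
  exact fun a b h => Polynomial.map_injective _ Int.cast_injective h

/-- the relation submodule -/
noncomputable def K (p : R) : Submodule R (R × R) :=
  Submodule.span R {((2:R), -p), ((0:R), (2:R))}

lemma rel1_mem_K (p : R) : ((2:R), -p) ∈ K p := Submodule.subset_span (by simp)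
lemma rel2_mem_K (p : R) : ((0:R), (2:R)) ∈ K p := Submodule.subset_span (by simp)

noncomputable def mkN : Q →ₗ[R] QtZt :=
  Submodule.mkQ (LinearMap.range (Algebra.linearMap R Q))

lemma mkN_eq_zero_iff (x : Q) : mkN x = 0 ↔ ∃ a : R, i a = x := by
  rw [mkN, Submodule.mkQ_apply, Submodule.Quotient.mk_eq_zero]
  constructor
  · rintro ⟨a, ha⟩; exact ⟨a, ha⟩
  · rintro ⟨a, ha⟩; exact ⟨a, ha⟩

noncomputable def γ : Q := Polynomial.C (1/4 : ℚ)

lemma hγ : (4 : Q) * γ = 1 := by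
  rw [γ, ← map_ofNat (Polynomial.C : ℚ →+* Q) 4, ← map_mul, ← Polynomial.C_1]
  norm_num

lemma smul_Q (a : R) (z : Q) : a • z = i a * z := Algebra.smul_def a z

/-- bilinear form value -/
noncomputable def val (p : R) (x y : R × R) : Q :=
  γ * (i (x.1 * y.1 * p) + 2 * i (x.1 * y.2 + x.2 * y.1))

noncomputable def Bil (p : R) : (R × R) →ₗ[R] (R × R) →ₗ[R] QtZt :=
  LinearMap.mk₂ R (fun x y => mkN (val p x y))
    (by intro x x' y
        show mkN (val p (x + x') y) = mkN (val p x y) + mkN (val p x' y)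
        have h : val p (x + x') y = val p x y + val p x' y := by
          simp only [val, Prod.fst_add, Prod.snd_add, map_add, map_mul]; ring
        rw [h, map_add])
    (by intro a x y
        show mkN (val p (a • x) y) = a • mkN (val p x y)
        have h : val p (a • x) y = a • val p x y := by
          simp only [val, Prod.smul_fst, Prod.smul_snd, smul_eq_mul, smul_Q, map_add, map_mul]
          ring
        rw [h, map_smul])
    (by intro x y y'
        show mkN (val p x (y + y')) = mkN (val p x y) + mkN (val p x y')
        have h : val p x (y + y') = val p x y + val p x y' := by
          simp only [val, Prod.fst_add, Prod.snd_add, map_add, map_mul]; ring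
        rw [h, map_add])
    (by intro a x y
        show mkN (val p x (a • y)) = a • mkN (val p x y)
        have h : val p x (a • y) = a • val p x y := by
          simp only [val, Prod.smul_fst, Prod.smul_snd, smul_eq_mul, smul_Q, map_add, map_mul]
          ring
        rw [h, map_smul])

lemma Bil_apply (p : R) (x y : R × R) : Bil p x y = mkN (val p x y) := rfl

lemma Bil_right_rel1 (p : R) (x : R × R) : Bil p x ((2:R), -p) = 0 := by
  rw [Bil_apply, mkN_eq_zero_iff]
  refine ⟨x.2, ?_⟩
  simp only [val, map_add, map_mul, map_neg, map_ofNat]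
  linear_combination (-i x.2) * hγ

lemma Bil_right_rel2 (p : R) (x : R × R) : Bil p x ((0:R), (2:R)) = 0 := by
  rw [Bil_apply, mkN_eq_zero_iff]
  refine ⟨x.1, ?_⟩
  simp only [val, map_add, map_mul, map_ofNat, map_zero]
  linear_combination (-i x.1) * hγ

lemma K_le_ker_Bil (p : R) (x : R × R) : K p ≤ LinearMap.ker (Bil p x) := by
  refine Submodule.span_le.mpr ?_
  rintro y hy
  simp only [Set.mem_insert_iff, Set.mem_singleton_iff] at hy
  rcases hy with rfl | rfl
  · exact Bil_right_rel1 p x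
  · exact Bil_right_rel2 p x

noncomputable def Φ₀ (p : R) : (R × R) →ₗ[R] (((R × R) ⧸ K p) →ₗ[R] QtZt) where
  toFun x := (K p).liftQ (Bil p x) (K_le_ker_Bil p x)
  map_add' x x' := by
    apply Submodule.linearMap_qext
    apply LinearMap.ext
    intro y
    simp only [LinearMap.comp_apply, Submodule.mkQ_apply, Submodule.liftQ_apply,
      LinearMap.add_apply, map_add]
  map_smul' a x := by
    apply Submodule.linearMap_qext
    apply LinearMap.ext
    intro y
    simp only [LinearMap.comp_apply, Submodule.mkQ_apply, Submodule.liftQ_apply,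
      LinearMap.smul_apply, map_smul, RingHom.id_apply]

lemma Φ₀_apply (p : R) (x y : R × R) :
    Φ₀ p x (Submodule.Quotient.mk y) = mkN (val p x y) := rfl

lemma Bil_left_rel1 (p : R) (y : R × R) : Bil p ((2:R), -p) y = 0 := by
  rw [Bil_apply, mkN_eq_zero_iff]
  refine ⟨y.2, ?_⟩
  simp only [val, map_add, map_mul, map_neg, map_ofNat]
  linear_combination (-i y.2) * hγ

lemma Bil_left_rel2 (p : R) (y : R × R) : Bil p ((0:R), (2:R)) y = 0 := by
  rw [Bil_apply, mkN_eq_zero_iff]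
  refine ⟨y.1, ?_⟩
  simp only [val, map_add, map_mul, map_ofNat, map_zero]
  linear_combination (-i y.1) * hγ

lemma K_le_ker_Φ₀ (p : R) : K p ≤ LinearMap.ker (Φ₀ p) := by
  refine Submodule.span_le.mpr ?_
  rintro x hx
  simp only [Set.mem_insert_iff, Set.mem_singleton_iff] at hx
  have key : Φ₀ p x = 0 := by
    apply Submodule.linearMap_qext
    apply LinearMap.ext
    intro y
    simp only [LinearMap.comp_apply, Submodule.mkQ_apply, LinearMap.zero_comp,
      LinearMap.zero_apply]
    show Φ₀ p x (Submodule.Quotient.mk y) = 0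
    rw [Φ₀_apply, ← Bil_apply]
    rcases hx with rfl | rfl
    · exact Bil_left_rel1 p y
    · exact Bil_left_rel2 p y
  exact key

noncomputable def Φ (p : R) : ((R × R) ⧸ K p) →ₗ[R] (((R × R) ⧸ K p) →ₗ[R] QtZt) :=
  (K p).liftQ (Φ₀ p) (K_le_ker_Φ₀ p)

lemma half_lemma (a b : R) (h : i a = Polynomial.C (1/2 : ℚ) * i b) : b = 2 * a := by
  apply i_inj
  rw [map_mul, map_ofNat, h, ← mul_assoc]
  have : (2 : Q) * Polynomial.C (1/2 : ℚ) = 1 := by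
    rw [← map_ofNat (Polynomial.C : ℚ →+* Q) 2, ← map_mul, ← Polynomial.C_1]
    norm_num
  rw [this, one_mul]

lemma two_gamma : (2 : Q) * γ = Polynomial.C (1/2 : ℚ) := by
  rw [γ, ← map_ofNat (Polynomial.C : ℚ →+* Q) 2, ← map_mul]
  norm_num

lemma mem_K (p : R) (x : R × R) (c d : R) (h1 : x.1 = 2 * c) (h2 : x.2 = 2 * d - c * p) :
    x ∈ K p := by
  refine Submodule.mem_span_pair.mpr ⟨c, d, ?_⟩
  ext
  · simp only [Prod.fst_add, Prod.smul_fst, smul_eq_mul]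
    rw [h1]; ring
  · simp only [Prod.snd_add, Prod.smul_snd, smul_eq_mul]
    rw [h2]; ring

lemma Φ_injective (p : R) : Function.Injective (Φ p) := by
  rw [← LinearMap.ker_eq_bot, eq_bot_iff]
  rintro z hz
  obtain ⟨x, rfl⟩ := Submodule.Quotient.mk_surjective _ z
  simp only [LinearMap.mem_ker] at hz
  have hz' : ∀ y : R × R, mkN (val p x y) = 0 := by
    intro y
    have : Φ p (Submodule.Quotient.mk x) (Submodule.Quotient.mk y) = 0 := by rw [hz]; rfl
    exact this
  have h1 := hz' ((0:R), (1:R))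
  rw [mkN_eq_zero_iff] at h1
  obtain ⟨c, hc⟩ := h1
  have hc' : i c = Polynomial.C (1/2 : ℚ) * i x.1 := by
    rw [hc]
    simp only [val, map_add, map_mul, map_one, map_zero]
    linear_combination (i x.1) * two_gamma
  have hx1 : x.1 = 2 * c := half_lemma c x.1 hc'
  have h2 := hz' ((1:R), (0:R))
  rw [mkN_eq_zero_iff] at h2
  obtain ⟨d, hd⟩ := h2
  have hd' : i d = Polynomial.C (1/2 : ℚ) * i (c * p + x.2) := by
    rw [hd]
    simp only [val, map_add, map_mul, map_one, map_zero, hx1, map_ofNat]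
    linear_combination (i c * i p + i x.2) * two_gamma
  have hx2 : c * p + x.2 = 2 * d := half_lemma d _ hd'
  rw [Submodule.mem_bot, Submodule.Quotient.mk_eq_zero]
  exact mem_K p x c d hx1 (by linear_combination hx2)

lemma Φ_surjective (p : R) : Function.Surjective (Φ p) := by
  intro f
  set x : QtZt := f (Submodule.Quotient.mk ((1:R), (0:R))) with hxdef
  set y : QtZt := f (Submodule.Quotient.mk ((0:R), (1:R))) with hydef
  -- relations
  have rel1 : (2:R) • y = 0 := by
    rw [hydef, ← map_smul]
    have h : (2:R) • (Submodule.Quotient.mk ((0:R), (1:R)) : (R × R) ⧸ K p) =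
        Submodule.Quotient.mk ((0:R), (2:R)) := by
      rw [← Submodule.Quotient.mk_smul]
      congr 1
      ext <;> simp
    rw [h, (Submodule.Quotient.mk_eq_zero (K p)).mpr (rel2_mem_K p), map_zero]
  have rel2 : (2:R) • x = p • y := by
    rw [hxdef, hydef, ← map_smul, ← map_smul]
    have h1 : (2:R) • (Submodule.Quotient.mk ((1:R), (0:R)) : (R × R) ⧸ K p) =
        Submodule.Quotient.mk ((2:R), (0:R)) := by
      rw [← Submodule.Quotient.mk_smul]; congr 1; ext <;> simp
    have h2 : (p:R) • (Submodule.Quotient.mk ((0:R), (1:R)) : (R × R) ⧸ K p) =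
        Submodule.Quotient.mk ((0:R), p) := by
      rw [← Submodule.Quotient.mk_smul]; congr 1; ext <;> simp
    rw [h1, h2]
    have h3 : (Submodule.Quotient.mk ((2:R), (0:R)) : (R × R) ⧸ K p) =
        Submodule.Quotient.mk ((2:R), -p) + Submodule.Quotient.mk ((0:R), p) := by
      rw [← Submodule.Quotient.mk_add]; congr 1; ext <;> simp
    rw [h3, map_add, (Submodule.Quotient.mk_eq_zero (K p)).mpr (rel1_mem_K p)]
    rw [map_zero, zero_add]
  -- lift representatives
  obtain ⟨Y, hY⟩ := Submodule.Quotient.mk_surjective _ y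
  obtain ⟨X, hX⟩ := Submodule.Quotient.mk_surjective _ x
  have h2Y : ∃ B : R, i B = (2:Q) * Y := by
    have h0 : mkN ((2:R) • Y) = 0 := by
      rw [mkN, Submodule.mkQ_apply, Submodule.Quotient.mk_smul, hY, rel1]
    rw [mkN_eq_zero_iff] at h0
    obtain ⟨B, hB⟩ := h0
    exact ⟨B, by rw [hB, smul_Q, map_ofNat]⟩
  obtain ⟨B, hB⟩ := h2Y
  have h2X : ∃ C : R, i C = (2:Q) * X - i p * Y := by
    have h0 : mkN ((2:R) • X - p • Y) = 0 := by
      rw [mkN, Submodule.mkQ_apply, Submodule.Quotient.mk_sub,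
        Submodule.Quotient.mk_smul, Submodule.Quotient.mk_smul, hX, hY, rel2, sub_self]
    rw [mkN_eq_zero_iff] at h0
    obtain ⟨C, hC⟩ := h0
    exact ⟨C, by rw [hC, smul_Q, smul_Q, map_ofNat]⟩
  obtain ⟨C, hC⟩ := h2X
  -- values of the bilinear form at the generators
  have e1 : val p ((B, C) : R × R) ((1:R), (0:R)) = X := by
    have h4 : (4:Q) ≠ 0 := by norm_num
    apply mul_left_cancel₀ h4
    simp only [val, map_add, map_mul, map_one, map_zero]
    linear_combination (i B * i p + 2 * i C) * hγ + i p * hB + 2 * hC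
  have e2 : val p ((B, C) : R × R) ((0:R), (1:R)) = Y := by
    have h4 : (2:Q) ≠ 0 := by norm_num
    apply mul_left_cancel₀ h4
    simp only [val, map_add, map_mul, map_one, map_zero]
    linear_combination i B * hγ + hB
  have hb1 : Bil p ((B, C) : R × R) ((1:R), (0:R)) = x := by
    rw [Bil_apply, e1, ← hX]; rfl
  have hb2 : Bil p ((B, C) : R × R) ((0:R), (1:R)) = y := by
    rw [Bil_apply, e2, ← hY]; rfl
  refine ⟨Submodule.Quotient.mk ((B, C) : R × R), ?_⟩
  apply LinearMap.ext
  intro z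
  obtain ⟨u, rfl⟩ := Submodule.Quotient.mk_surjective _ z
  show Bil p ((B, C) : R × R) u = f (Submodule.Quotient.mk u)
  have hu : (u : R × R) = u.1 • ((1:R), (0:R)) + u.2 • ((0:R), (1:R)) := by
    ext <;> simp
  have hmku : (Submodule.Quotient.mk u : (R × R) ⧸ K p) =
      u.1 • Submodule.Quotient.mk ((1:R), (0:R)) + u.2 • Submodule.Quotient.mk ((0:R), (1:R)) := by
    rw [← Submodule.Quotient.mk_smul, ← Submodule.Quotient.mk_smul,
      ← Submodule.Quotient.mk_add, ← hu]
  calc Bil p ((B, C) : R × R) u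
      = u.1 • Bil p ((B, C) : R × R) ((1:R), (0:R))
        + u.2 • Bil p ((B, C) : R × R) ((0:R), (1:R)) := by
        conv_lhs => rw [hu]
        rw [map_add, map_smul, map_smul]
    _ = u.1 • x + u.2 • y := by rw [hb1, hb2]
    _ = f (Submodule.Quotient.mk u) := by
        rw [hmku, map_add, map_smul, map_smul, hxdef, hydef]

/-- the presentation map into Z4t -/
noncomputable def e (p : R) : (R × R) →ₗ[R] Z4t :=
  (Submodule.mkQ (Ideal.span {(4:R)})).comp
    (p • LinearMap.fst R R R + (2:R) • LinearMap.snd R R R)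

lemma e_apply (p : R) (u : R × R) :
    e p u = Ideal.Quotient.mk (Ideal.span {(4:R)}) (p * u.1 + 2 * u.2) := by
  show Submodule.Quotient.mk ((p • LinearMap.fst R R R + (2:R) • LinearMap.snd R R R) u) = _
  simp only [LinearMap.add_apply, LinearMap.smul_apply, LinearMap.fst_apply,
    LinearMap.snd_apply, smul_eq_mul]
  rfl

lemma prime_two : Prime (2 : R) := by
  have h : (2 : R) = Polynomial.C 2 := by simp
  rw [h, Polynomial.prime_C_iff]
  exact Int.prime_two

lemma ker_e (p : R) (hp : p ∉ Ideal.span {(2 : R)}) : LinearMap.ker (e p) = K p := by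
  have h2p : ¬ (2:R) ∣ p := fun h => hp (Ideal.mem_span_singleton.mpr h)
  apply le_antisymm
  · rintro ⟨u, v⟩ hu
    rw [LinearMap.mem_ker, e_apply] at hu
    rw [Ideal.Quotient.eq_zero_iff_mem, Ideal.mem_span_singleton] at hu
    obtain ⟨w, hw⟩ := hu
    have h2u : (2:R) ∣ u := by
      have hdvd : (2:R) ∣ p * u := ⟨2 * w - v, by linear_combination hw⟩
      rcases (prime_two.dvd_mul.mp hdvd) with h | h
      · exact absurd h h2p
      · exact h
    obtain ⟨c, hc⟩ := h2u
    have hv : v = 2 * w - c * p := by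
      have h2 : (2:R) * (2 * w - c * p) = 2 * v := by
        have : p * (2 * c) + 2 * v = 4 * w := by rw [← hc]; exact hw
        linear_combination -this
      exact (mul_left_cancel₀ (by exact two_ne_zero) h2).symm
    exact mem_K p (u, v) c w hc hv
  · refine Submodule.span_le.mpr ?_
    rintro x hx
    simp only [Set.mem_insert_iff, Set.mem_singleton_iff] at hx
    rcases hx with rfl | rfl
    · rw [SetLike.mem_coe, LinearMap.mem_ker, e_apply]
      rw [Ideal.Quotient.eq_zero_iff_mem, Ideal.mem_span_singleton]
      exact ⟨0, by ring⟩
    · rw [SetLike.mem_coe, LinearMap.mem_ker, e_apply]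
      rw [Ideal.Quotient.eq_zero_iff_mem, Ideal.mem_span_singleton]
      exact ⟨1, by ring⟩

lemma range_e (p : R) : LinearMap.range (e p) = Mp p := by
  apply le_antisymm
  · rintro _ ⟨⟨u, v⟩, rfl⟩
    rw [e_apply]
    have h : Ideal.Quotient.mk (Ideal.span {(4:R)}) (p * u + 2 * v) =
        u • Ideal.Quotient.mk (Ideal.span {(4:R)}) p +
        v • Ideal.Quotient.mk (Ideal.span {(4:R)}) 2 := by
      show Submodule.Quotient.mk _ = u • Submodule.Quotient.mk _ + v • Submodule.Quotient.mk _
      rw [← Submodule.Quotient.mk_smul, ← Submodule.Quotient.mk_smul, ← Submodule.Quotient.mk_add]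
      congr 1
      simp only [smul_eq_mul]
      ring
    rw [h]
    exact Submodule.add_mem _
      (Submodule.smul_mem _ _ (Submodule.subset_span (by simp)))
      (Submodule.smul_mem _ _ (Submodule.subset_span (by simp)))
  · rw [Mp]
    refine Submodule.span_le.mpr ?_
    rintro z hz
    simp only [Set.mem_insert_iff, Set.mem_singleton_iff] at hz
    rcases hz with rfl | rfl
    · exact ⟨((1:R), (0:R)), by rw [e_apply]; congr 1; ring⟩
    · exact ⟨((0:R), (1:R)), by rw [e_apply]; congr 1; ring⟩

noncomputable def ψ (p : R) (hp : p ∉ Ideal.span {(2 : R)}) :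
    ((R × R) ⧸ K p) ≃ₗ[R] Mp p :=
  ((Submodule.quotEquivOfEq (K p) (LinearMap.ker (e p)) (ker_e p hp).symm).trans
    (LinearMap.quotKerEquivRange (e p))).trans (LinearEquiv.ofEq _ _ (range_e p))

end MpAux

/-- For every `p ∈ ℤ[t]` with `p ∉ 2ℤ[t]`, the `ℤ[t]`-module `M(p)` is isomorphic to
its dual `M(p)^∧ = Hom_{ℤ[t]}(M(p), ℚ[t]/ℤ[t])`. -/
theorem Mp_self_dual (p : Polynomial ℤ) (hp : p ∉ Ideal.span {(2 : Polynomial ℤ)}) :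
    Nonempty ((Mp p) ≃ₗ[Polynomial ℤ] ((Mp p) →ₗ[Polynomial ℤ] QtZt)) := by
  refine ⟨((MpAux.ψ p hp).symm.trans
    (LinearEquiv.ofBijective (MpAux.Φ p) ⟨MpAux.Φ_injective p, MpAux.Φ_surjective p⟩)).trans
    (LinearEquiv.arrowCongr (MpAux.ψ p hp) (LinearEquiv.refl _ _))⟩
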